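/- Let S be a finite set with binary relation → whose set of absorbing sets is {A_1, ..., A_m} (these are pairwise disjoint). A set V ⊆ S is a generalized stable set if and only if V ⊆ A_1 ∪ ... ∪ A_m and |V ∩ A_i| = 1 for each i = 1, ..., m. -/
import Mathlib


/-- `A` is an absorbing set of `(S, r)`. -/
def IsAbsorbing {S : Type*} (r : S → S → Prop) (A : Set S) : Prop :=
  A.Nonempty ∧
  (∀ s ∈ A, ∀ t ∈ A, Relation.ReflTransGen r t s) ∧
  (∀ s ∈ A, ∀ t ∉ A, ¬ Relation.ReflTransGen r s t)

/-- `V` is a generalized stable set. -/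
def IsGenStable {S : Type*} (r : S → S → Prop) (V : Set S) : Prop :=
  (∀ s ∈ V, ∀ t ∈ V, s ≠ t → ¬ Relation.TransGen r t s) ∧
  (∀ t ∉ V, ∃ s ∈ V, Relation.ReflTransGen r t s)

open Relation

private lemma rtg_transGen_of_ne {S : Type*} {r : S → S → Prop} {a b : S}
    (h : ReflTransGen r a b) (hne : a ≠ b) : TransGen r a b := by
  rcases reflTransGen_iff_eq_or_transGen.mp h with h | h
  · exact absurd h.symm hne
  · exact h

private lemma exists_reach_absorbing {S : Type*} [Fintype S] (r : S → S → Prop) (t : S) :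
    ∃ A : Set S, IsAbsorbing r A ∧ ∃ s ∈ A, ReflTransGen r t s := by
  classical
  set sr : S → S → Prop := fun u v => ReflTransGen r u v ∧ ¬ ReflTransGen r v u with hsr
  haveI : IsTrans S (flip sr) := ⟨by
    rintro a b c ⟨h1, h2⟩ ⟨h3, h4⟩
    exact ⟨h3.trans h1, fun h => h4 (h1.trans h)⟩⟩
  haveI : IsIrrefl S (flip sr) := ⟨fun a h => h.2 h.1⟩
  have wf : WellFounded (flip sr) := Finite.wellFounded_of_trans_of_irrefl _
  obtain ⟨a, ha, hmax⟩ := wf.has_min {s | ReflTransGen r t s} ⟨t, ReflTransGen.refl⟩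
  refine ⟨{u | ReflTransGen r a u}, ⟨⟨a, ReflTransGen.refl⟩, ?_, ?_⟩, a, ReflTransGen.refl, ha⟩
  · intro s hs u hu
    have hua : ReflTransGen r u a := by
      by_contra h
      exact hmax u (ha.trans hu) ⟨hu, h⟩
    exact hua.trans hs
  · intro s hs u hu hsu
    exact hu (hs.trans hsu)

/-- If the absorbing sets of `(S, r)` are exactly the pairwise disjoint sets
`A 1, ..., A m` (with `m ≥ 1`), then `V` is a generalized stable set iff
`V ⊆ A 1 ∪ ... ∪ A m` and `V` meets each `A i` in exactly one point. -/
theorem genStable_iff_selector {S : Type*} [Fintype S] (r : S → S → Prop) (m : ℕ)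
    (hm : 0 < m) (A : Fin m → Set S)
    (hA : ∀ B : Set S, IsAbsorbing r B ↔ ∃ i : Fin m, B = A i)
    (hinj : Function.Injective A)
    (hdisj : ∀ i j : Fin m, i ≠ j → A i ∩ A j = ∅)
    (V : Set S) :
    IsGenStable r V ↔ (V ⊆ ⋃ i : Fin m, A i ∧ ∀ i : Fin m, ∃! x : S, x ∈ V ∩ A i) := by
  classical
  have habs : ∀ i, IsAbsorbing r (A i) := fun i => (hA (A i)).mpr ⟨i, rfl⟩
  -- every point reaches some A i
  have hreach : ∀ t : S, ∃ i : Fin m, ∃ s ∈ A i, ReflTransGen r t s := by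
    intro t
    obtain ⟨B, hB, s, hsB, hts⟩ := exists_reach_absorbing r t
    obtain ⟨i, rfl⟩ := (hA B).mp hB
    exact ⟨i, s, hsB, hts⟩
  constructor
  · rintro ⟨h1, h2⟩
    -- key: if s ∈ V reaches a point of A i, then s ∈ A i
    have key : ∀ s ∈ V, ∀ i : Fin m, ∀ a ∈ A i, ReflTransGen r s a → s ∈ A i := by
      intro s hs i a haA hsa
      by_contra hsA
      by_cases haV : a ∈ V
      · have hne : s ≠ a := fun h => hsA (h ▸ haA)
        exact h1 a haV s hs (fun h => hne h.symm) (rtg_transGen_of_ne hsa hne)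
      · obtain ⟨v, hvV, hav⟩ := h2 a haV
        have hvA : v ∈ A i := by
          by_contra hvA
          exact (habs i).2.2 a haA v hvA hav
        have hne : s ≠ v := fun h => hsA (h ▸ hvA)
        exact h1 v hvV s hs (fun h => hne h.symm)
          (rtg_transGen_of_ne (hsa.trans hav) hne)
    constructor
    · intro s hs
      obtain ⟨i, a, haA, hsa⟩ := hreach s
      exact Set.mem_iUnion.mpr ⟨i, key s hs i a haA hsa⟩
    · intro i
      obtain ⟨a, haA⟩ := (habs i).1
      have hex : ∃ x, x ∈ V ∩ A i := by
        by_cases haV : a ∈ V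
        · exact ⟨a, haV, haA⟩
        · obtain ⟨v, hvV, hav⟩ := h2 a haV
          have hvA : v ∈ A i := by
            by_contra hvA
            exact (habs i).2.2 a haA v hvA hav
          exact ⟨v, hvV, hvA⟩
      obtain ⟨x, hxV, hxA⟩ := hex
      refine ⟨x, ⟨hxV, hxA⟩, ?_⟩
      rintro y ⟨hyV, hyA⟩
      by_contra hne
      exact h1 x hxV y hyV (fun h => hne (h.symm))
        (rtg_transGen_of_ne ((habs i).2.1 x hxA y hyA) hne)
  · rintro ⟨hsub, huniq⟩
    constructor
    · intro s hs t ht hne htr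
      obtain ⟨j, htj⟩ := Set.mem_iUnion.mp (hsub ht)
      by_cases hsj : s ∈ A j
      · obtain ⟨x, _, hx⟩ := huniq j
        exact hne ((hx s ⟨hs, hsj⟩).trans (hx t ⟨ht, htj⟩).symm)
      · exact (habs j).2.2 t htj s hsj htr.to_reflTransGen
    · intro t htV
      obtain ⟨i, a, haA, hta⟩ := hreach t
      obtain ⟨x, ⟨hxV, hxA⟩, _⟩ := huniq i
      exact ⟨x, hxV, hta.trans ((habs i).2.1 x hxA a haA)⟩
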